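/- In SP_9, for every vertex v and every sign ε ∈ {+,−}, any 3-element subset of N^ε(v) is triangle-free, and therefore by Lemma 5 its ε'-neighborhood union has exactly 8 elements for each sign ε'. -/
import Mathlib

open Polynomial

/-- GF(9) constructed as GF(3)[x]/(x²+1). -/
abbrev F9 : Type := AdjoinRoot (X ^ 2 + 1 : (ZMod 3)[X])

/-- The class of the polynomial x. -/
noncomputable def ξ : F9 := AdjoinRoot.root _

/-- `a` is a nonzero square in GF(9). -/
def Sq (a : F9) : Prop := a ≠ 0 ∧ ∃ b : F9, b ^ 2 = a

/-- ε-neighborhood of a vertex in SP₉ (ε = true means positive). -/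
def Nb (ε : Bool) (v : F9) : Set F9 :=
  {u | u ≠ v ∧ (if ε then Sq (u - v) else ¬ Sq (u - v))}

/-- A set of vertices of SP₉ is (signed) triangle-free. -/
def TriFree (S : Set F9) : Prop :=
  (¬ ∃ a b c, a ∈ S ∧ b ∈ S ∧ c ∈ S ∧ a ≠ b ∧ a ≠ c ∧ b ≠ c ∧
      Sq (a - b) ∧ Sq (b - c) ∧ Sq (a - c)) ∧
  (¬ ∃ a b c, a ∈ S ∧ b ∈ S ∧ c ∈ S ∧ a ≠ b ∧ a ≠ c ∧ b ≠ c ∧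
      ¬ Sq (a - b) ∧ ¬ Sq (b - c) ∧ ¬ Sq (a - c))

/-! ### A concrete model of GF(9) -/

structure FF where
  a : ZMod 3
  b : ZMod 3
deriving DecidableEq, Fintype

instance : Zero FF := ⟨⟨0,0⟩⟩
instance : One FF := ⟨⟨1,0⟩⟩
instance : Add FF := ⟨fun x y => ⟨x.a+y.a, x.b+y.b⟩⟩
instance : Mul FF := ⟨fun x y => ⟨x.a*y.a - x.b*y.b, x.a*y.b + x.b*y.a⟩⟩
instance : Neg FF := ⟨fun x => ⟨-x.a, -x.b⟩⟩

set_option maxHeartbeats 4000000 in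
instance : CommRing FF where
  add_assoc := by decide
  zero_add := by decide
  add_zero := by decide
  add_comm := by decide
  left_distrib := by decide
  right_distrib := by decide
  zero_mul := by decide
  mul_zero := by decide
  mul_assoc := by decide
  one_mul := by decide
  mul_one := by decide
  mul_comm := by decide
  neg_add_cancel := by decide
  nsmul := nsmulRec
  zsmul := zsmulRec

lemma hmon : (X ^ 2 + 1 : (ZMod 3)[X]).Monic := by
  have : (1 : (ZMod 3)[X]) = C 1 := by simp
  rw [this]; exact monic_X_pow_add_C _ (by norm_num)

noncomputable def pb : PowerBasis (ZMod 3) F9 := AdjoinRoot.powerBasis' hmon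

noncomputable instance : Fintype F9 := Fintype.ofEquiv _ pb.basis.equivFun.toEquiv.symm

lemma card_F9 : Fintype.card F9 = 9 := by
  rw [Fintype.card_congr pb.basis.equivFun.toEquiv]
  have hd : pb.dim = 2 := by
    show (X ^ 2 + 1 : (ZMod 3)[X]).natDegree = 2
    have : (1 : (ZMod 3)[X]) = C 1 := by simp
    rw [this]; exact natDegree_X_pow_add_C
  simp [hd]

def i3 : ZMod 3 →+* FF where
  toFun a := ⟨a, 0⟩
  map_one' := rfl
  map_mul' := by decide
  map_zero' := rfl
  map_add' := by decide

def xi' : FF := ⟨0, 1⟩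

noncomputable def ψ : F9 →+* FF :=
  AdjoinRoot.lift i3 xi' (by
    simp [eval₂_add, eval₂_pow, eval₂_one, eval₂_X]
    decide)

lemma ψ_surj : Function.Surjective ψ := by
  intro z
  refine ⟨AdjoinRoot.of _ z.a + AdjoinRoot.of _ z.b * ξ, ?_⟩
  simp [ψ, ξ, AdjoinRoot.lift_of, AdjoinRoot.lift_root]
  show i3 z.a + i3 z.b * xi' = z
  revert z; decide

lemma ψ_bij : Function.Bijective ψ := by
  rw [Fintype.bijective_iff_surjective_and_card]
  refine ⟨ψ_surj, ?_⟩
  rw [card_F9]; decide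

/-! ### Decidable analogues on `FF` -/

def SqF (x : FF) : Prop := x ≠ 0 ∧ ∃ b : FF, b ^ 2 = x
instance : DecidablePred SqF := fun _ => instDecidableAnd

def nbF (ε : Bool) (t : FF) : Finset FF :=
  Finset.univ.filter (fun w => w ≠ t ∧ (if ε then SqF (w-t) else ¬ SqF (w-t)))

set_option maxHeartbeats 8000000 in
lemma core : ∀ (ε : Bool) (T : Finset FF), (∀ u ∈ T, u ∈ nbF ε 0) → T.card = 3 →
    ((¬ ∃ x ∈ T, ∃ y ∈ T, ∃ z ∈ T, x ≠ y ∧ x ≠ z ∧ y ≠ z ∧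
        SqF (x-y) ∧ SqF (y-z) ∧ SqF (x-z)) ∧
     (¬ ∃ x ∈ T, ∃ y ∈ T, ∃ z ∈ T, x ≠ y ∧ x ≠ z ∧ y ≠ z ∧
        ¬SqF (x-y) ∧ ¬SqF (y-z) ∧ ¬SqF (x-z))) ∧
    ∀ ε' : Bool, (T.biUnion (nbF ε')).card = 8 := by decide

lemma Sq_iff (z : F9) : Sq z ↔ SqF (ψ z) := by
  constructor
  · rintro ⟨hz, b, hb⟩
    refine ⟨fun h => hz (ψ_bij.1 (by rw [h, map_zero])), ⟨ψ b, by rw [← map_pow, hb]⟩⟩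
  · rintro ⟨hz, c, hc⟩
    refine ⟨fun h => hz (by rw [h, map_zero]), ?_⟩
    obtain ⟨b, rfl⟩ := ψ_surj c
    exact ⟨b, ψ_bij.1 (by rw [map_pow, hc])⟩

/-- Any 3-element subset of a signed neighborhood N^ε(v) is triangle-free, and
hence each of its signed neighborhood unions has exactly 8 elements. -/
theorem three_subsets_of_neighborhoods (v : F9) (ε : Bool) (S : Set F9)
    (hsub : S ⊆ Nb ε v) (hcard : S.ncard = 3) :
    TriFree S ∧ ∀ ε' : Bool, (⋃ s ∈ S, Nb ε' s).ncard = 8 := by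
  set θ : F9 → FF := fun u => ψ u - ψ v with hθ
  have θinj : Function.Injective θ := by
    intro x y h
    exact ψ_bij.1 (by simpa [hθ, sub_left_inj] using h)
  have θsurj : Function.Surjective θ := by
    intro w
    obtain ⟨u, hu⟩ := ψ_surj (w + ψ v)
    exact ⟨u, by simp [hθ, hu]⟩
  have θsub : ∀ x y : F9, θ x - θ y = ψ (x - y) := by
    intro x y; simp [hθ, map_sub]
  have hSq : ∀ x y : F9, Sq (x - y) ↔ SqF (θ x - θ y) := by
    intro x y; rw [θsub, Sq_iff]
  have memθ : ∀ (ε₀ : Bool) (u s : F9), u ∈ Nb ε₀ s ↔ θ u ∈ nbF ε₀ (θ s) := by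
    intro ε₀ u s
    simp only [Nb, Set.mem_setOf_eq, nbF, Finset.mem_filter, Finset.mem_univ, true_and]
    constructor
    · rintro ⟨hne, hif⟩
      refine ⟨fun h => hne (θinj h), ?_⟩
      cases ε₀ <;> simpa [hSq u s] using hif
    · rintro ⟨hne, hif⟩
      refine ⟨fun h => hne (by rw [h]), ?_⟩
      cases ε₀ <;> simpa [hSq u s] using hif
  have hθv : θ v = 0 := by simp [hθ]
  have hSfin : S.Finite := Set.toFinite S
  set T : Finset FF := (hSfin.image θ).toFinset with hTdef
  have hTcoe : (↑T : Set FF) = θ '' S := Set.Finite.coe_toFinset _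
  have hTmem : ∀ w, w ∈ T ↔ w ∈ θ '' S := by
    intro w; rw [← Finset.mem_coe, hTcoe]
  have hTsub : ∀ u ∈ T, u ∈ nbF ε 0 := by
    intro u hu
    obtain ⟨s, hs, rfl⟩ := (hTmem u).1 hu
    have := (memθ ε s v).1 (hsub hs)
    rwa [hθv] at this
  have hTcard : T.card = 3 := by
    rw [← Set.ncard_coe_finset, hTcoe, Set.ncard_image_of_injective _ θinj, hcard]
  obtain ⟨⟨hpos, hneg⟩, hcard8⟩ := core ε T hTsub hTcard
  constructor
  · constructor
    · rintro ⟨a, b, c, ha, hb, hc, hab, hac, hbc, s1, s2, s3⟩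
      exact hpos ⟨θ a, (hTmem _).2 ⟨a, ha, rfl⟩, θ b, (hTmem _).2 ⟨b, hb, rfl⟩,
        θ c, (hTmem _).2 ⟨c, hc, rfl⟩, fun h => hab (θinj h), fun h => hac (θinj h),
        fun h => hbc (θinj h), (hSq a b).1 s1, (hSq b c).1 s2, (hSq a c).1 s3⟩
    · rintro ⟨a, b, c, ha, hb, hc, hab, hac, hbc, s1, s2, s3⟩
      exact hneg ⟨θ a, (hTmem _).2 ⟨a, ha, rfl⟩, θ b, (hTmem _).2 ⟨b, hb, rfl⟩,
        θ c, (hTmem _).2 ⟨c, hc, rfl⟩, fun h => hab (θinj h), fun h => hac (θinj h),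
        fun h => hbc (θinj h), fun h => s1 ((hSq a b).2 h), fun h => s2 ((hSq b c).2 h),
        fun h => s3 ((hSq a c).2 h)⟩
  · intro ε'
    have himg : θ '' (⋃ s ∈ S, Nb ε' s) = ↑(T.biUnion (nbF ε')) := by
      ext w
      simp only [Set.mem_image, Set.mem_iUnion, Finset.coe_biUnion, Finset.mem_coe,
        Set.mem_iUnion, exists_prop]
      constructor
      · rintro ⟨u, ⟨s, hs, hu⟩, rfl⟩
        exact ⟨θ s, (hTmem _).2 ⟨s, hs, rfl⟩, (memθ ε' u s).1 hu⟩
      · rintro ⟨t, ht, hw⟩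
        obtain ⟨s, hs, rfl⟩ := (hTmem t).1 ht
        obtain ⟨u, rfl⟩ := θsurj w
        exact ⟨u, ⟨s, hs, (memθ ε' u s).2 hw⟩, rfl⟩
    calc (⋃ s ∈ S, Nb ε' s).ncard
        = (θ '' (⋃ s ∈ S, Nb ε' s)).ncard := (Set.ncard_image_of_injective _ θinj).symm
      _ = (↑(T.biUnion (nbF ε')) : Set FF).ncard := by rw [himg]
      _ = (T.biUnion (nbF ε')).card := Set.ncard_coe_finset _
      _ = 8 := hcard8 ε'
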